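/- arXiv:1404.6216 — 5 statements merged into one kernel-verified Lean document; each statement's English description precedes it below -/
import Mathlib

section
/- The resemblance kernel R(S,T) = |S∩T|/|S∪T|, defined on nonempty finite subsets of a fixed finite set Ω, is positive definite: for any finite collection of nonempty sets S₁,…,Sₙ ⊆ Ω and reals c₁,…,cₙ, Σ_{i,j} cᵢcⱼ R(Sᵢ,Sⱼ) ≥ 0. -/
open Finset

section aux
set_option linter.unusedSectionVars false
variable {Ω : Type*} [Fintype Ω] [DecidableEq Ω]

/-- the element of `U` minimizing `f`. -/
def argm (f : Ω ≃ Fin (Fintype.card Ω)) (U : Finset Ω) (hU : U.Nonempty) : Ω :=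
  f.symm ((U.image f).min' (hU.image f))

lemma argm_eq_iff {f : Ω ≃ Fin (Fintype.card Ω)} {U : Finset Ω} (hU : U.Nonempty) {x : Ω} :
    argm f U hU = x ↔ x ∈ U ∧ ∀ z ∈ U, f x ≤ f z := by
  rw [argm, Equiv.symm_apply_eq]
  constructor
  · intro h
    have hm : (f x : Fin _) ∈ U.image f := h ▸ Finset.min'_mem _ _
    obtain ⟨a, ha, hfa⟩ := Finset.mem_image.1 hm
    have hax : a = x := f.injective hfa
    subst hax
    refine ⟨ha, fun z hz => ?_⟩
    exact h ▸ Finset.min'_le _ _ (Finset.mem_image_of_mem f hz)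
  · rintro ⟨hx, hall⟩
    apply le_antisymm
    · exact Finset.min'_le _ _ (Finset.mem_image_of_mem f hx)
    · refine Finset.le_min' _ _ _ ?_
      rintro y hy
      obtain ⟨a, ha, rfl⟩ := Finset.mem_image.1 hy
      exact hall a ha

lemma argm_mem {f : Ω ≃ Fin (Fintype.card Ω)} {U : Finset Ω} (hU : U.Nonempty) :
    argm f U hU ∈ U := ((argm_eq_iff hU).1 rfl).1

lemma argm_swap {f : Ω ≃ Fin (Fintype.card Ω)} {U : Finset Ω} (hU : U.Nonempty) {x y : Ω}
    (hx : x ∈ U) (hy : y ∈ U) (h : argm f U hU = x) :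
    argm ((Equiv.swap x y).trans f) U hU = y := by
  rw [argm_eq_iff hU] at h ⊢
  refine ⟨hy, fun z hz => ?_⟩
  simp only [Equiv.trans_apply, Equiv.swap_apply_right]
  apply h.2
  rcases eq_or_ne z x with rfl | hzx
  · rwa [Equiv.swap_apply_left]
  · rcases eq_or_ne z y with rfl | hzy
    · rwa [Equiv.swap_apply_right]
    · rwa [Equiv.swap_apply_of_ne_of_ne hzx hzy]

lemma fiber_card_eq {U : Finset Ω} (hU : U.Nonempty) {x y : Ω} (hx : x ∈ U) (hy : y ∈ U) :
    (univ.filter fun f : Ω ≃ Fin (Fintype.card Ω) => argm f U hU = x).card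
      = (univ.filter fun f : Ω ≃ Fin (Fintype.card Ω) => argm f U hU = y).card := by
  have hswap : ∀ f : Ω ≃ Fin (Fintype.card Ω),
      (Equiv.swap x y).trans ((Equiv.swap x y).trans f) = f := by
    intro f
    rw [← Equiv.trans_assoc, Equiv.swap_swap, Equiv.refl_trans]
  refine Finset.card_nbij' (fun f => (Equiv.swap x y).trans f)
    (fun f => (Equiv.swap x y).trans f) ?_ ?_ ?_ ?_
  · intro f hf
    simp only [mem_coe, mem_filter, mem_univ, true_and] at hf ⊢
    exact argm_swap hU hx hy hf
  · intro f hf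
    simp only [mem_coe, mem_filter, mem_univ, true_and] at hf ⊢
    have h2 := argm_swap hU hy hx hf
    rwa [Equiv.swap_comm] at h2
  · intro f _; exact hswap f
  · intro f _; exact hswap f

lemma fiber_mul {U : Finset Ω} (hU : U.Nonempty) {x : Ω} (hx : x ∈ U) :
    (univ.filter fun f : Ω ≃ Fin (Fintype.card Ω) => argm f U hU = x).card * U.card
      = (Nat.factorial (Fintype.card Ω)) := by
  have h1 : (univ : Finset (Ω ≃ Fin (Fintype.card Ω))).card
      = ∑ y ∈ U, (univ.filter fun f : Ω ≃ Fin (Fintype.card Ω) => argm f U hU = y).card :=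
    Finset.card_eq_sum_card_fiberwise (fun f _ => argm_mem hU)
  have h2 : ∑ y ∈ U, (univ.filter fun f : Ω ≃ Fin (Fintype.card Ω) => argm f U hU = y).card
      = ∑ _y ∈ U, (univ.filter fun f : Ω ≃ Fin (Fintype.card Ω) => argm f U hU = x).card :=
    Finset.sum_congr rfl fun y hy => fiber_card_eq hU hy hx
  have h3 := h1.trans h2
  rw [Finset.sum_const, smul_eq_mul, Finset.card_univ,
    Fintype.card_equiv (Fintype.equivFin Ω)] at h3
  rw [mul_comm, ← h3]

lemma count_pair {A U : Finset Ω} (hAU : A ⊆ U) (hU : U.Nonempty) :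
    (univ.filter fun f : Ω ≃ Fin (Fintype.card Ω) => argm f U hU ∈ A).card * U.card
      = A.card * (Nat.factorial (Fintype.card Ω)) := by
  have h1 : (univ.filter fun f : Ω ≃ Fin (Fintype.card Ω) => argm f U hU ∈ A).card
      = ∑ x ∈ A, ((univ.filter fun f : Ω ≃ Fin (Fintype.card Ω) => argm f U hU ∈ A).filter
          fun f => argm f U hU = x).card :=
    Finset.card_eq_sum_card_fiberwise (fun f hf => (Finset.mem_filter.1 hf).2)
  have h2 : ∀ x ∈ A, ((univ.filter fun f : Ω ≃ Fin (Fintype.card Ω) => argm f U hU ∈ A).filter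
      fun f => argm f U hU = x)
      = univ.filter fun f : Ω ≃ Fin (Fintype.card Ω) => argm f U hU = x := by
    intro x hx
    rw [Finset.filter_filter]
    refine Finset.filter_congr fun f _ => ?_
    constructor
    · exact fun h => h.2
    · exact fun h => ⟨h ▸ hx, h⟩
  have h2' : ∑ x ∈ A, ((univ.filter fun f : Ω ≃ Fin (Fintype.card Ω) => argm f U hU ∈ A).filter
      fun f => argm f U hU = x).card
      = ∑ x ∈ A, (univ.filter fun f : Ω ≃ Fin (Fintype.card Ω) => argm f U hU = x).card :=
    Finset.sum_congr rfl fun x hx => by rw [h2 x hx]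
  rw [h1, h2', Finset.sum_mul]
  have h3 : ∑ x ∈ A, (univ.filter fun f : Ω ≃ Fin (Fintype.card Ω) => argm f U hU = x).card * U.card
      = ∑ _x ∈ A, (Nat.factorial (Fintype.card Ω)) :=
    Finset.sum_congr rfl fun x hx => fiber_mul hU (hAU hx)
  rw [h3, Finset.sum_const, smul_eq_mul]

lemma key_eq_iff {f : Ω ≃ Fin (Fintype.card Ω)} {Si Sj : Finset Ω} (hi : Si.Nonempty)
    (hj : Sj.Nonempty) :
    argm f Si hi = argm f Sj hj ↔ argm f (Si ∪ Sj) hi.inl ∈ Si ∩ Sj := by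
  constructor
  · intro h
    obtain ⟨hai, halli⟩ := (argm_eq_iff hi (x := argm f Si hi)).1 rfl
    obtain ⟨haj, hallj⟩ := (argm_eq_iff hj (x := argm f Sj hj)).1 rfl
    have hu : argm f (Si ∪ Sj) hi.inl = argm f Si hi := by
      rw [argm_eq_iff]
      refine ⟨Finset.mem_union_left _ hai, fun z hz => ?_⟩
      rcases Finset.mem_union.1 hz with hz | hz
      · exact halli z hz
      · exact h ▸ hallj z hz
    rw [hu, Finset.mem_inter]
    exact ⟨hai, h ▸ haj⟩
  · intro h
    obtain ⟨hui, huj⟩ := Finset.mem_inter.1 h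
    obtain ⟨hu, hallu⟩ := (argm_eq_iff hi.inl (x := argm f (Si ∪ Sj) hi.inl)).1 rfl
    have e1 : argm f Si hi = argm f (Si ∪ Sj) hi.inl := by
      rw [argm_eq_iff]
      exact ⟨hui, fun z hz => hallu z (Finset.mem_union_left _ hz)⟩
    have e2 : argm f Sj hj = argm f (Si ∪ Sj) hi.inl := by
      rw [argm_eq_iff]
      exact ⟨huj, fun z hz => hallu z (Finset.mem_union_right _ hz)⟩
    rw [e1, e2]

end aux

/-- The resemblance (Jaccard) kernel is positive definite on nonempty finite subsets
of a fixed finite set Ω. -/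
theorem resemblance_pos_def {Ω : Type*} [Fintype Ω] [DecidableEq Ω] (n : ℕ)
    (S : Fin n → Finset Ω) (hS : ∀ i, (S i).Nonempty) (c : Fin n → ℝ) :
    0 ≤ ∑ i, ∑ j, c i * c j *
      (((S i ∩ S j).card : ℝ) / ((S i ∪ S j).card : ℝ)) := by
  classical
  set K : ℝ := ((Nat.factorial (Fintype.card Ω)) : ℝ) with hKdef
  have hK : (0:ℝ) < K := by
    rw [hKdef]; exact_mod_cast Nat.factorial_pos _
  set key : (Ω ≃ Fin (Fintype.card Ω)) → Fin n → Ω := fun f i => argm f (S i) (hS i) with hkey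
  have hcount : ∀ i j, ((S i ∩ S j).card : ℝ) / ((S i ∪ S j).card : ℝ)
      = ((univ.filter fun f : Ω ≃ Fin (Fintype.card Ω) => key f i = key f j).card : ℝ) / K := by
    intro i j
    have hU : (S i ∪ S j).Nonempty := (hS i).inl
    have hfilter : (univ.filter fun f : Ω ≃ Fin (Fintype.card Ω) => key f i = key f j)
        = univ.filter fun f : Ω ≃ Fin (Fintype.card Ω) => argm f (S i ∪ S j) hU ∈ S i ∩ S j :=
      Finset.filter_congr fun f _ => key_eq_iff (hS i) (hS j)
    have hc := count_pair (Finset.inter_subset_union (s := S i) (t := S j)) hU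
    have hU0 : ((S i ∪ S j).card : ℝ) ≠ 0 := by
      exact_mod_cast (Finset.card_pos.2 hU).ne'
    rw [div_eq_div_iff hU0 hK.ne', hfilter]
    rw [hKdef]
    exact_mod_cast hc.symm
  calc (0:ℝ) ≤ (∑ f : Ω ≃ Fin (Fintype.card Ω), ∑ v : Ω,
        (∑ i, c i * (if key f i = v then (1:ℝ) else 0))^2) / K := by positivity
    _ = ∑ i, ∑ j, c i * c j *
        (((S i ∩ S j).card : ℝ) / ((S i ∪ S j).card : ℝ)) := by
      have expand : ∀ f : Ω ≃ Fin (Fintype.card Ω),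
          ∑ v : Ω, (∑ i, c i * (if key f i = v then (1:ℝ) else 0))^2
          = ∑ i, ∑ j, c i * c j * (if key f i = key f j then (1:ℝ) else 0) := by
        intro f
        simp_rw [sq, Finset.sum_mul_sum]
        rw [Finset.sum_comm]
        refine Finset.sum_congr rfl fun i _ => ?_
        rw [Finset.sum_comm]
        refine Finset.sum_congr rfl fun j _ => ?_
        simp only [mul_ite, mul_one, mul_zero, ite_mul, zero_mul]
        rw [Finset.sum_ite_eq univ (key f j)]
        simp
      have swap2 : ∑ f : Ω ≃ Fin (Fintype.card Ω), ∑ i, ∑ j,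
          c i * c j * (if key f i = key f j then (1:ℝ) else 0)
          = ∑ i, ∑ j, ∑ f : Ω ≃ Fin (Fintype.card Ω),
            c i * c j * (if key f i = key f j then (1:ℝ) else 0) := by
        rw [Finset.sum_comm]
        refine Finset.sum_congr rfl fun i _ => Finset.sum_comm
      rw [Finset.sum_congr rfl fun f _ => expand f, swap2, Finset.sum_div,
        Finset.sum_congr rfl fun i (_ : i ∈ univ) => Finset.sum_div _ _ _]
      refine Finset.sum_congr rfl fun i _ => Finset.sum_congr rfl fun j _ => ?_
      rw [hcount i j]
      rw [← Finset.mul_sum, Finset.sum_boole, mul_div_assoc]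
end

section
/- For a uniformly random permutation π of Ω = {1,…,D} and nonempty sets S,T ⊆ Ω, the probability that min π(S) = min π(T) equals the resemblance R(S,T) = |S∩T|/|S∪T|. -/
open Finset

/-- Minwise hashing collision probability: for a uniformly random permutation π of
{1,…,D} and nonempty S, T ⊆ {1,…,D}, Pr[min π(S) = min π(T)] = |S∩T|/|S∪T|. -/
theorem minwise_collision_probability (D : ℕ) (S T : Finset (Fin D))
    (hS : S.Nonempty) (hT : T.Nonempty) :
    ((Finset.univ.filter (fun π : Equiv.Perm (Fin D) =>
        (S.image π).min' (hS.image π) = (T.image π).min' (hT.image π))).card : ℝ) /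
      (Fintype.card (Equiv.Perm (Fin D)) : ℝ) =
    ((S ∩ T).card : ℝ) / ((S ∪ T).card : ℝ) := by
  classical
  set U := S ∪ T with hUdef
  have hUne : U.Nonempty := hS.inl
  set a : Equiv.Perm (Fin D) → Fin D :=
    fun π => π.symm ((U.image π).min' (hUne.image π)) with ha
  have amem : ∀ π : Equiv.Perm (Fin D), a π ∈ U := by
    intro π
    have h := (U.image π).min'_mem (hUne.image π)
    obtain ⟨u, hu, hπu⟩ := Finset.mem_image.mp h
    simp only [ha, ← hπu, Equiv.symm_apply_apply]
    exact hu
  have himg : ∀ (x y : Fin D), x ∈ U → y ∈ U → ∀ π : Equiv.Perm (Fin D),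
      U.image ⇑(π * Equiv.swap x y) = U.image ⇑π := by
    intro x y hx hy π
    have hswap : U.image ⇑(Equiv.swap x y) = U := by
      ext z
      simp only [Finset.mem_image]
      constructor
      · rintro ⟨w, hw, rfl⟩
        rcases eq_or_ne w x with rfl | hwx
        · simpa [Equiv.swap_apply_left] using hy
        rcases eq_or_ne w y with rfl | hwy
        · simpa [Equiv.swap_apply_right] using hx
        · simpa [Equiv.swap_apply_of_ne_of_ne hwx hwy] using hw
      · intro hz
        refine ⟨Equiv.swap x y z, ?_, by simp⟩
        rcases eq_or_ne z x with rfl | hzx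
        · simpa [Equiv.swap_apply_left] using hy
        rcases eq_or_ne z y with rfl | hzy
        · simpa [Equiv.swap_apply_right] using hx
        · simpa [Equiv.swap_apply_of_ne_of_ne hzx hzy] using hz
    calc U.image ⇑(π * Equiv.swap x y)
        = (U.image ⇑(Equiv.swap x y)).image ⇑π := by
          rw [Finset.image_image]; rfl
      _ = U.image ⇑π := by rw [hswap]
  have aswap : ∀ (x y : Fin D), x ∈ U → y ∈ U → ∀ π : Equiv.Perm (Fin D),
      a (π * Equiv.swap x y) = Equiv.swap x y (a π) := by
    intro x y hx hy π
    have h := himg x y hx hy π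
    simp only [ha]
    have hmin : (U.image ⇑(π * Equiv.swap x y)).min' (hUne.image _)
        = (U.image ⇑π).min' (hUne.image _) := by
      congr 1
    rw [hmin]
    simp [← Equiv.Perm.inv_def, mul_inv_rev, Equiv.Perm.mul_apply, Equiv.swap_inv]
  have hfiber : ∀ x ∈ U, ∀ y ∈ U,
      (univ.filter fun π : Equiv.Perm (Fin D) => a π = x).card
        = (univ.filter fun π : Equiv.Perm (Fin D) => a π = y).card := by
    intro x hx y hy
    apply Finset.card_bij' (fun π _ => π * Equiv.swap x y) (fun π _ => π * Equiv.swap x y)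
    · intro π hπ
      simp only [mem_filter, mem_univ, true_and] at hπ ⊢
      rw [aswap x y hx hy π, hπ, Equiv.swap_apply_left]
    · intro π hπ
      simp only [mem_filter, mem_univ, true_and] at hπ ⊢
      rw [aswap x y hx hy π, hπ, Equiv.swap_apply_right]
    · intro π _; rw [mul_assoc]; simp
    · intro π _; rw [mul_assoc]; simp
  have hcond : ∀ π : Equiv.Perm (Fin D),
      ((S.image π).min' (hS.image π) = (T.image π).min' (hT.image π)) ↔ a π ∈ S ∩ T := by
    intro π
    have hSsub : S.image ⇑π ⊆ U.image ⇑π := image_subset_image subset_union_left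
    have hTsub : T.image ⇑π ⊆ U.image ⇑π := image_subset_image subset_union_right
    have hUimg : U.image ⇑π = S.image ⇑π ∪ T.image ⇑π := image_union ..
    constructor
    · intro h
      have h1 : (U.image ⇑π).min' (hUne.image _) = (S.image ⇑π).min' (hS.image _) := by
        apply le_antisymm
        · exact Finset.min'_le _ _ (hSsub (Finset.min'_mem _ _))
        · apply Finset.le_min'
          intro z hz
          rw [hUimg] at hz
          rcases Finset.mem_union.mp hz with hz | hz
          · exact Finset.min'_le _ _ hz
          · rw [h]; exact Finset.min'_le _ _ hz
      have hmS := Finset.min'_mem (S.image ⇑π) (hS.image _)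
      obtain ⟨u, hu, hπu⟩ := Finset.mem_image.mp hmS
      have hmT := Finset.min'_mem (T.image ⇑π) (hT.image _)
      obtain ⟨v, hv, hπv⟩ := Finset.mem_image.mp hmT
      have hau : a π = u := by
        simp only [ha, h1, ← hπu, Equiv.symm_apply_apply]
      have huv : u = v := by
        apply π.injective; rw [hπu, hπv, h]
      rw [hau, Finset.mem_inter]
      exact ⟨hu, huv ▸ hv⟩
    · intro h
      rw [Finset.mem_inter] at h
      have hπa : π (a π) = (U.image ⇑π).min' (hUne.image _) := by
        simp [ha]
      have hUS : (U.image ⇑π).min' (hUne.image _) ∈ S.image ⇑π := by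
        rw [← hπa]; exact Finset.mem_image_of_mem _ h.1
      have hUT : (U.image ⇑π).min' (hUne.image _) ∈ T.image ⇑π := by
        rw [← hπa]; exact Finset.mem_image_of_mem _ h.2
      have h1 : (S.image ⇑π).min' (hS.image _) = (U.image ⇑π).min' (hUne.image _) :=
        le_antisymm (Finset.min'_le _ _ hUS)
          (Finset.min'_le _ _ (hSsub (Finset.min'_mem _ _)))
      have h2 : (T.image ⇑π).min' (hT.image _) = (U.image ⇑π).min' (hUne.image _) :=
        le_antisymm (Finset.min'_le _ _ hUT)
          (Finset.min'_le _ _ (hTsub (Finset.min'_mem _ _)))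
      rw [h1, h2]
  have hfilter_eq : (univ.filter (fun π : Equiv.Perm (Fin D) =>
        (S.image π).min' (hS.image π) = (T.image π).min' (hT.image π))) =
      univ.filter (fun π => a π ∈ S ∩ T) :=
    Finset.filter_congr (fun π _ => by simpa using hcond π)
  have hsum1 : (univ.filter fun π : Equiv.Perm (Fin D) => a π ∈ S ∩ T).card
      = ∑ x ∈ S ∩ T, (univ.filter fun π : Equiv.Perm (Fin D) => a π = x).card := by
    rw [Finset.card_eq_sum_card_fiberwise
      (s := univ.filter fun π : Equiv.Perm (Fin D) => a π ∈ S ∩ T) (f := a) (t := S ∩ T) (fun π hπ => (Finset.mem_filter.mp hπ).2)]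
    refine Finset.sum_congr rfl (fun x hx => ?_)
    congr 1
    rw [Finset.filter_filter]
    refine Finset.filter_congr (fun π _ => ?_)
    constructor
    · exact fun h => h.2
    · exact fun h => ⟨h ▸ hx, h⟩
  have hsum2 : Fintype.card (Equiv.Perm (Fin D))
      = ∑ x ∈ U, (univ.filter fun π : Equiv.Perm (Fin D) => a π = x).card := by
    rw [← Finset.card_univ]
    exact Finset.card_eq_sum_card_fiberwise (fun π _ => amem π)
  obtain ⟨x₀, hx₀⟩ := hUne
  set c := (univ.filter fun π : Equiv.Perm (Fin D) => a π = x₀).card with hc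
  have hSTsub : S ∩ T ⊆ U := inter_subset_left.trans subset_union_left
  have h1 : (univ.filter fun π : Equiv.Perm (Fin D) => a π ∈ S ∩ T).card
      = (S ∩ T).card * c := by
    rw [hsum1, Finset.sum_congr rfl (fun x hx => hfiber x (hSTsub hx) x₀ hx₀)]
    simp [mul_comm, hc]
  have h2 : Fintype.card (Equiv.Perm (Fin D)) = U.card * c := by
    rw [hsum2, Finset.sum_congr rfl (fun x hx => hfiber x hx x₀ hx₀)]
    simp [mul_comm, hc]
  have hc0 : c ≠ 0 := by
    have hpos : 0 < Fintype.card (Equiv.Perm (Fin D)) := Fintype.card_pos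
    rw [h2] at hpos
    intro h; simp [h] at hpos
  rw [hfilter_eq, h1, h2]
  push_cast
  rw [mul_div_mul_right _ _ (by exact_mod_cast hc0 : (c : ℝ) ≠ 0)]
end

section
/- Let u,v ∈ ℝ^D be unit vectors with supports S_u, S_v of sizes f₁ = |S_u|, f₂ = |S_v|, and a = |S_u∩S_v| > 0. Apply a uniformly random permutation π to the coordinates; let i* be the element of S_u∪S_v minimizing π, and define the estimator Y = √(f₁f₂)·u_{i*}v_{i*}·1{i* ∈ S_u∩S_v} (i.e., Y = √(f₁f₂)V(u)V(v)1{L(u)=L(v)}). Then E[Y] = ρ·√(f₁f₂)/(f₁+f₂−a), where ρ = ⟨u,v⟩. -/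
open Finset

lemma swap_image_self' {D : ℕ} {W : Finset (Fin D)} {i j : Fin D}
    (hi : i ∈ W) (hj : j ∈ W) : W.image (Equiv.swap i j) = W := by
  apply Finset.eq_of_subset_of_card_le
  · intro k hk
    obtain ⟨m, hm, rfl⟩ := Finset.mem_image.mp hk
    rcases eq_or_ne m i with rfl | hmi
    · simpa [Equiv.swap_apply_left] using hj
    rcases eq_or_ne m j with rfl | hmj
    · simpa [Equiv.swap_apply_right] using hi
    · simpa [Equiv.swap_apply_of_ne_of_ne hmi hmj] using hm
  · rw [Finset.card_image_of_injective _ (Equiv.injective _)]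

lemma min'_congr' {α : Type*} [LinearOrder α] (s t : Finset α) (hs : s.Nonempty)
    (ht : t.Nonempty) (h : s = t) : s.min' hs = t.min' ht := by subst h; rfl

/-- Type 2 CoRE kernel estimator is unbiased: averaging over all permutations π,
E[√(f₁f₂)·u_{i*}v_{i*}·1{i* ∈ S_u∩S_v}] = ρ√(f₁f₂)/(f₁+f₂−a), where i* is the
element of S_u∪S_v minimizing π. -/
theorem core2_unbiased (D : ℕ) (u v : Fin D → ℝ)
    (hu : ∑ i, (u i) ^ 2 = 1) (hv : ∑ i, (v i) ^ 2 = 1)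
    (Su Sv : Finset (Fin D))
    (hSu : Su = Finset.univ.filter (fun i => u i ≠ 0))
    (hSv : Sv = Finset.univ.filter (fun i => v i ≠ 0))
    (f₁ f₂ a : ℕ) (hf₁ : f₁ = Su.card) (hf₂ : f₂ = Sv.card)
    (ha : a = (Su ∩ Sv).card) (hapos : 0 < a)
    (hW : (Su ∪ Sv).Nonempty) :
    (∑ π : Equiv.Perm (Fin D),
        Real.sqrt (f₁ * f₂) *
          u (π.symm (((Su ∪ Sv).image π).min' (hW.image π))) *
          v (π.symm (((Su ∪ Sv).image π).min' (hW.image π))) *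
          (if π.symm (((Su ∪ Sv).image π).min' (hW.image π)) ∈ Su ∩ Sv
            then (1 : ℝ) else 0)) /
      (Fintype.card (Equiv.Perm (Fin D)) : ℝ)
    = (∑ i, u i * v i) * Real.sqrt (f₁ * f₂) / ((f₁ : ℝ) + f₂ - a) := by
  classical
  set W : Finset (Fin D) := Su ∪ Sv with hWdef
  set istar : Equiv.Perm (Fin D) → Fin D :=
    fun π => π.symm ((W.image π).min' (hW.image π)) with histar_def
  set F : Fin D → ℝ := fun i =>
    Real.sqrt (f₁ * f₂) * u i * v i * (if i ∈ Su ∩ Sv then 1 else 0) with hF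
  show (∑ π : Equiv.Perm (Fin D), F (istar π)) /
      (Fintype.card (Equiv.Perm (Fin D)) : ℝ)
    = (∑ i, u i * v i) * Real.sqrt (f₁ * f₂) / ((f₁ : ℝ) + f₂ - a)
  -- istar lands in W
  have hmemW : ∀ π : Equiv.Perm (Fin D), istar π ∈ W := by
    intro π
    have h := Finset.min'_mem (W.image π) (hW.image π)
    obtain ⟨j, hjW, hje⟩ := Finset.mem_image.mp h
    have : istar π = j := by
      simp only [histar_def, ← hje, Equiv.symm_apply_apply]
    rwa [this]
  -- equivariance under right multiplication by a swap inside W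
  have hist_mul : ∀ (π : Equiv.Perm (Fin D)) (i j : Fin D), i ∈ W → j ∈ W →
      istar (π * Equiv.swap i j) = Equiv.swap i j (istar π) := by
    intro π i j hi hj
    have himg : W.image (π * Equiv.swap i j) = W.image π := by
      have : ⇑(π * Equiv.swap i j) = ⇑π ∘ ⇑(Equiv.swap i j) := rfl
      rw [this, ← Finset.image_image, swap_image_self' hi hj]
    simp only [histar_def]
    rw [min'_congr' _ _ (hW.image _) (hW.image π) himg]
    rfl
  -- all fibers of istar over W have the same cardinality
  have hfib : ∀ i ∈ W, ∀ j ∈ W,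
      (univ.filter (fun π : Equiv.Perm (Fin D) => istar π = i)).card =
      (univ.filter (fun π : Equiv.Perm (Fin D) => istar π = j)).card := by
    intro i hi j hj
    apply Finset.card_bij' (fun π _ => π * Equiv.swap i j) (fun π _ => π * Equiv.swap i j)
    · intro π hπ
      rw [Finset.mem_filter] at hπ ⊢
      refine ⟨Finset.mem_univ _, ?_⟩
      rw [hist_mul π i j hi hj, hπ.2, Equiv.swap_apply_left]
    · intro π hπ
      rw [Finset.mem_filter] at hπ ⊢
      refine ⟨Finset.mem_univ _, ?_⟩
      rw [hist_mul π i j hi hj, hπ.2, Equiv.swap_apply_right]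
    · intro π _
      rw [mul_assoc, Equiv.swap_mul_self, mul_one]
    · intro π _
      rw [mul_assoc, Equiv.swap_mul_self, mul_one]
  obtain ⟨i₀, hi₀⟩ := hW
  set c : ℕ := (univ.filter (fun π : Equiv.Perm (Fin D) => istar π = i₀)).card with hc
  -- counting: |Perm| = W.card * c
  have hcount : Fintype.card (Equiv.Perm (Fin D)) = W.card * c := by
    rw [← Finset.card_univ, Finset.card_eq_sum_card_fiberwise (fun π _ => hmemW π),
      Finset.sum_congr rfl (fun i hi => hfib i hi i₀ hi₀), Finset.sum_const, smul_eq_mul]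
  -- the main sum
  have hsum : ∑ π : Equiv.Perm (Fin D), F (istar π) = (c : ℝ) * ∑ i ∈ W, F i := by
    rw [← Finset.sum_fiberwise_of_maps_to (fun π _ => hmemW π) (fun π => F (istar π)),
      Finset.mul_sum]
    apply Finset.sum_congr rfl
    intro i hiW
    have h1 : ∀ π ∈ univ.filter (fun π : Equiv.Perm (Fin D) => istar π = i),
        F (istar π) = F i := by
      intro π hπ; rw [(Finset.mem_filter.mp hπ).2]
    rw [Finset.sum_congr rfl h1, Finset.sum_const, hfib i hiW i₀ hi₀, nsmul_eq_mul]
  -- u i * v i vanishes off Su ∩ Sv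
  have hUV : ∀ i, i ∉ Su ∩ Sv → u i * v i = 0 := by
    intro i hi
    rw [Finset.mem_inter, not_and_or] at hi
    rcases hi with h | h
    · rw [hSu] at h
      simp only [Finset.mem_filter, Finset.mem_univ, true_and, not_not] at h
      rw [h, zero_mul]
    · rw [hSv] at h
      simp only [Finset.mem_filter, Finset.mem_univ, true_and, not_not] at h
      rw [h, mul_zero]
  have hFW : ∑ i ∈ W, F i = Real.sqrt (f₁ * f₂) * ∑ i, u i * v i := by
    have h1 : ∑ i ∈ W, F i = ∑ i ∈ W, Real.sqrt (f₁ * f₂) * (u i * v i) := by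
      apply Finset.sum_congr rfl
      intro i _
      by_cases h : i ∈ Su ∩ Sv
      · simp only [hF, h, if_pos, mul_one]; ring
      · simp only [hF]
        rw [if_neg h, mul_zero, hUV i h, mul_zero]
    rw [h1, ← Finset.mul_sum]
    congr 1
    apply Finset.sum_subset (Finset.subset_univ W)
    intro i _ hiW
    exact hUV i (fun h => hiW (Finset.mem_union_left _ (Finset.mem_inter.mp h).1))
  -- cardinality identity
  have hcardW : (W.card : ℝ) = (f₁ : ℝ) + f₂ - a := by
    have h2 : W.card + a = f₁ + f₂ := by
      rw [hf₁, hf₂, ha]; exact Finset.card_union_add_card_inter Su Sv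
    have h3 := congrArg (Nat.cast : ℕ → ℝ) h2
    push_cast at h3
    linarith
  -- nonvanishing
  have hcardpos : 0 < Fintype.card (Equiv.Perm (Fin D)) := Fintype.card_pos
  have hc0 : (c : ℝ) ≠ 0 := by
    have : c ≠ 0 := by
      intro h
      rw [h, mul_zero] at hcount
      omega
    exact_mod_cast this
  have hW0 : (W.card : ℝ) ≠ 0 := by
    have : W.card ≠ 0 := Finset.card_ne_zero_of_mem hi₀
    exact_mod_cast this
  have hcast : (Fintype.card (Equiv.Perm (Fin D)) : ℝ) = (W.card : ℝ) * c := by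
    exact_mod_cast congrArg (Nat.cast : ℕ → ℝ) hcount
  rw [hsum, hFW, hcast, ← hcardW]
  field_simp
end

section
/- In the setting of the Type 2 CoRE kernel estimator with one random permutation: Var(Y) = (f₁f₂/(f₁+f₂−a))·(Σᵢ uᵢ²vᵢ² − (Σᵢ uᵢvᵢ)²/(f₁+f₂−a)), where Y = √(f₁f₂)V(u)V(v)1{L(u)=L(v)}. -/
open Finset

set_option maxHeartbeats 1000000 in
/-- Variance of the one-sample Type 2 CoRE kernel estimator:
Var(Y) = (f₁f₂/(f₁+f₂−a))·(Σᵢ uᵢ²vᵢ² − (Σᵢ uᵢvᵢ)²/(f₁+f₂−a)), where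
Y = √(f₁f₂)·u_{i*}v_{i*}·1{i* ∈ S_u∩S_v} and i* minimizes the random permutation π
over S_u∪S_v. -/
theorem core2_variance (D : ℕ) (u v : Fin D → ℝ)
    (hu : ∑ i, (u i) ^ 2 = 1) (hv : ∑ i, (v i) ^ 2 = 1)
    (Su Sv : Finset (Fin D))
    (hSu : Su = Finset.univ.filter (fun i => u i ≠ 0))
    (hSv : Sv = Finset.univ.filter (fun i => v i ≠ 0))
    (f₁ f₂ a : ℕ) (hf₁ : f₁ = Su.card) (hf₂ : f₂ = Sv.card)
    (ha : a = (Su ∩ Sv).card) (hapos : 0 < a)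
    (hW : (Su ∪ Sv).Nonempty)
    (Y : Equiv.Perm (Fin D) → ℝ)
    (hY : ∀ π : Equiv.Perm (Fin D),
      Y π = Real.sqrt (f₁ * f₂) *
          u (π.symm (((Su ∪ Sv).image π).min' (hW.image π))) *
          v (π.symm (((Su ∪ Sv).image π).min' (hW.image π))) *
          (if π.symm (((Su ∪ Sv).image π).min' (hW.image π)) ∈ Su ∩ Sv
            then (1 : ℝ) else 0)) :
    (∑ π : Equiv.Perm (Fin D), (Y π) ^ 2) / (Fintype.card (Equiv.Perm (Fin D)) : ℝ)
      - ((∑ π : Equiv.Perm (Fin D), Y π) / (Fintype.card (Equiv.Perm (Fin D)) : ℝ)) ^ 2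
    = ((f₁ : ℝ) * f₂ / ((f₁ : ℝ) + f₂ - a)) *
        (∑ i, (u i) ^ 2 * (v i) ^ 2 - (∑ i, u i * v i) ^ 2 / ((f₁ : ℝ) + f₂ - a)) := by
  classical
  set W : Finset (Fin D) := Su ∪ Sv with hWdef
  set I : Equiv.Perm (Fin D) → Fin D :=
    fun π => π.symm ((W.image π).min' (hW.image π)) with hIdef
  have hImem : ∀ π, I π ∈ W := by
    intro π
    obtain ⟨x, hx, hxeq⟩ := Finset.mem_image.mp (Finset.min'_mem (W.image π) (hW.image π))
    have : I π = x := by simp [hIdef, ← hxeq]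
    rwa [this]
  -- swap invariance
  have hIswap : ∀ i j, i ∈ W → j ∈ W → ∀ π : Equiv.Perm (Fin D),
      I (π * Equiv.swap i j) = Equiv.swap i j (I π) := by
    intro i j hi hj π
    have himg : W.image (Equiv.swap i j) = W := by
      apply Finset.eq_of_subset_of_card_le
      · intro x hx
        obtain ⟨y, hy, rfl⟩ := Finset.mem_image.mp hx
        rcases eq_or_ne y i with rfl | hyi
        · simpa [Equiv.swap_apply_left] using hj
        rcases eq_or_ne y j with rfl | hyj
        · simpa [Equiv.swap_apply_right] using hi
        · rwa [Equiv.swap_apply_of_ne_of_ne hyi hyj]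
      · rw [Finset.card_image_of_injective _ (Equiv.injective _)]
    have himg2 : W.image ⇑(π * Equiv.swap i j) = W.image π := by
      have : ⇑(π * Equiv.swap i j) = π ∘ (Equiv.swap i j) := rfl
      rw [this, ← Finset.image_image, himg]
    simp only [hIdef]
    have hmin : (W.image ⇑(π * Equiv.swap i j)).min' (hW.image _)
        = (W.image π).min' (hW.image π) := by
      congr 1
    rw [hmin]
    show (Equiv.swap i j).symm (π.symm _) = _
    rw [Equiv.symm_swap]
  -- fibers have equal cardinality
  have hfib : ∀ i ∈ W, ∀ j ∈ W,
      (univ.filter (fun π => I π = i)).card = (univ.filter (fun π => I π = j)).card := by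
    intro i hi j hj
    apply Finset.card_bij' (fun π _ => π * Equiv.swap i j) (fun π _ => π * Equiv.swap i j)
    · intro π hπ
      simp only [Finset.mem_filter, Finset.mem_univ, true_and] at hπ ⊢
      rw [hIswap i j hi hj, hπ, Equiv.swap_apply_left]
    · intro π hπ
      simp only [Finset.mem_filter, Finset.mem_univ, true_and] at hπ ⊢
      rw [hIswap i j hi hj, hπ, Equiv.swap_apply_right]
    · intro π _
      rw [mul_assoc, Equiv.swap_mul_self, mul_one]
    · intro π _
      rw [mul_assoc, Equiv.swap_mul_self, mul_one]
  obtain ⟨i₀, hi₀⟩ := hW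
  set c : ℕ := (univ.filter (fun π => I π = i₀)).card with hcdef
  -- key: fiberwise summation
  have key : ∀ F : Fin D → ℝ,
      ∑ π : Equiv.Perm (Fin D), F (I π) = (c : ℝ) * ∑ i ∈ W, F i := by
    intro F
    rw [← Finset.sum_fiberwise_of_maps_to (g := I) (fun π _ => hImem π) (fun π => F (I π))]
    rw [Finset.mul_sum]
    refine Finset.sum_congr rfl ?_
    intro i hi
    have : ∀ π ∈ univ.filter (fun π => I π = i), F (I π) = F i := by
      intro π hπ
      simp only [Finset.mem_filter] at hπ
      rw [hπ.2]
    rw [Finset.sum_congr rfl this, Finset.sum_const, nsmul_eq_mul, hfib i hi i₀ hi₀]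
  have hcardN : (Fintype.card (Equiv.Perm (Fin D)) : ℕ) = W.card * c := by
    have := Finset.sum_fiberwise_of_maps_to (g := I) (fun (π : Equiv.Perm (Fin D)) (_ : π ∈ univ) => hImem π) (fun _ => (1 : ℕ))
    simp only [Finset.sum_const, smul_eq_mul, mul_one, Finset.card_univ] at this
    rw [← this]
    rw [Finset.sum_congr rfl (fun i hi => hfib i hi i₀ hi₀), Finset.sum_const, smul_eq_mul]
  -- numbers
  have hNpos : 0 < Fintype.card (Equiv.Perm (Fin D)) := Fintype.card_pos
  have hWpos : 0 < W.card := Finset.card_pos.mpr ⟨i₀, hi₀⟩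
  have hcpos : 0 < c := by
    by_contra h
    push_neg at h
    have hc0 : c = 0 := Nat.le_zero.mp h
    rw [hc0, mul_zero] at hcardN
    omega
  have hn : (W.card : ℝ) = (f₁ : ℝ) + f₂ - a := by
    have := Finset.card_union_add_card_inter Su Sv
    rw [hf₁, hf₂, ha]
    push_cast
    have : (W.card : ℝ) + ((Su ∩ Sv).card : ℝ) = (Su.card : ℝ) + Sv.card := by
      exact_mod_cast this
    linarith
  -- sums
  set S₁ : ℝ := ∑ i, u i * v i with hS1
  set S₂ : ℝ := ∑ i, (u i) ^ 2 * (v i) ^ 2 with hS2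
  have husupp : ∀ i, i ∉ Su → u i = 0 := by
    intro i hi; by_contra h; exact hi (by simp [hSu, h])
  have hvsupp : ∀ i, i ∉ Sv → v i = 0 := by
    intro i hi; by_contra h; exact hi (by simp [hSv, h])
  have hG : ∑ i ∈ W, (u i * v i * (if i ∈ Su ∩ Sv then (1:ℝ) else 0)) = S₁ := by
    rw [hS1, ← Finset.sum_subset (Finset.subset_univ W)]
    · refine Finset.sum_congr rfl ?_
      intro i hi
      by_cases h : i ∈ Su ∩ Sv
      · simp [h]
      · simp only [h, if_neg, mul_zero]
        rcases Finset.mem_union.mp hi with h1 | h2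
        · have : i ∉ Sv := fun hv' => h (Finset.mem_inter.mpr ⟨h1, hv'⟩)
          simp [hvsupp i this]
        · have : i ∉ Su := fun hu' => h (Finset.mem_inter.mpr ⟨hu', h2⟩)
          simp [husupp i this]
    · intro i _ hi
      have : i ∉ Su := fun h => hi (Finset.mem_union_left _ h)
      simp [husupp i this]
  have hH : ∑ i ∈ W, ((u i)^2 * (v i)^2 * (if i ∈ Su ∩ Sv then (1:ℝ) else 0)) = S₂ := by
    rw [hS2, ← Finset.sum_subset (Finset.subset_univ W)]
    · refine Finset.sum_congr rfl ?_
      intro i hi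
      by_cases h : i ∈ Su ∩ Sv
      · simp [h]
      · simp only [h, if_neg, mul_zero]
        rcases Finset.mem_union.mp hi with h1 | h2
        · have : i ∉ Sv := fun hv' => h (Finset.mem_inter.mpr ⟨h1, hv'⟩)
          simp [hvsupp i this]
        · have : i ∉ Su := fun hu' => h (Finset.mem_inter.mpr ⟨hu', h2⟩)
          simp [husupp i this]
    · intro i _ hi
      have : i ∉ Su := fun h => hi (Finset.mem_union_left _ h)
      simp [husupp i this]
  -- rewrite Y
  have hsq : Real.sqrt ((f₁ : ℝ) * f₂) ^ 2 = (f₁ : ℝ) * f₂ := by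
    rw [Real.sq_sqrt (by positivity)]
  have hY1 : ∑ π : Equiv.Perm (Fin D), Y π
      = Real.sqrt ((f₁:ℝ) * f₂) * ((c : ℝ) * S₁) := by
    have : ∀ π : Equiv.Perm (Fin D), Y π
        = Real.sqrt ((f₁:ℝ) * f₂) *
          (fun i => u i * v i * (if i ∈ Su ∩ Sv then (1:ℝ) else 0)) (I π) := by
      intro π
      rw [hY π]
      push_cast
      ring
    rw [Finset.sum_congr rfl (fun π _ => this π), ← Finset.mul_sum,
      key (fun i => u i * v i * (if i ∈ Su ∩ Sv then (1:ℝ) else 0)), hG]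
  have hY2 : ∑ π : Equiv.Perm (Fin D), (Y π) ^ 2
      = ((f₁:ℝ) * f₂) * ((c : ℝ) * S₂) := by
    have : ∀ π : Equiv.Perm (Fin D), (Y π) ^ 2
        = ((f₁:ℝ) * f₂) *
          (fun i => (u i)^2 * (v i)^2 * (if i ∈ Su ∩ Sv then (1:ℝ) else 0)) (I π) := by
      intro π
      rw [hY π]
      by_cases h : I π ∈ Su ∩ Sv
      · simp only [hIdef] at h ⊢
        rw [if_pos h]
        simp only [if_pos h, mul_one]
        rw [mul_pow, mul_pow]
        push_cast
        rw [hsq]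
        ring
      · simp only [hIdef] at h ⊢
        rw [if_neg h]
        simp [if_neg h]
    rw [Finset.sum_congr rfl (fun π _ => this π), ← Finset.mul_sum,
      key (fun i => (u i)^2 * (v i)^2 * (if i ∈ Su ∩ Sv then (1:ℝ) else 0)), hH]
  rw [hY1, hY2]
  have hNeq : (Fintype.card (Equiv.Perm (Fin D)) : ℝ) = (W.card : ℝ) * c := by
    exact_mod_cast hcardN
  rw [hNeq]
  have hnne : ((f₁ : ℝ) + f₂ - a) ≠ 0 := by
    rw [← hn]; exact_mod_cast hWpos.ne'
  have hcne : (c : ℝ) ≠ 0 := by exact_mod_cast hcpos.ne'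
  rw [← hn]
  have hwne : (W.card : ℝ) ≠ 0 := by exact_mod_cast hWpos.ne'
  field_simp
  ring_nf
  rw [hsq]
end

section
/- If u,v ∈ ℝ^D are binary-uniform unit vectors, i.e., uᵢ = 1/√f₁ on its support of size f₁ and 0 elsewhere, and vᵢ = 1/√f₂ on its support of size f₂, then the variance of the one-sample Type 2 estimator equals R − R², where R = a/(f₁+f₂−a) and a is the intersection size. -/
open Finset

/-- For binary-uniform unit vectors, the one-sample Type 2 CoRE estimator variance
formula specializes to R − R², where R = a/(f₁+f₂−a). -/
theorem core2_variance_binary (D : ℕ) (u v : Fin D → ℝ)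
    (Su Sv : Finset (Fin D))
    (f₁ f₂ a : ℕ) (hf₁ : f₁ = Su.card) (hf₂ : f₂ = Sv.card)
    (ha : a = (Su ∩ Sv).card) (hapos : 0 < a)
    (hubin : ∀ i, u i = if i ∈ Su then 1 / Real.sqrt f₁ else 0)
    (hvbin : ∀ i, v i = if i ∈ Sv then 1 / Real.sqrt f₂ else 0)
    (R : ℝ) (hR : R = (a : ℝ) / ((f₁ : ℝ) + f₂ - a)) :
    ((f₁ : ℝ) * f₂ / ((f₁ : ℝ) + f₂ - a)) *
        (∑ i, (u i) ^ 2 * (v i) ^ 2 - (∑ i, u i * v i) ^ 2 / ((f₁ : ℝ) + f₂ - a))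
      = R - R ^ 2 := by
  have haf1 : a ≤ f₁ := by
    rw [ha, hf₁]; exact Finset.card_le_card Finset.inter_subset_left
  have haf2 : a ≤ f₂ := by
    rw [ha, hf₂]; exact Finset.card_le_card Finset.inter_subset_right
  have hf1pos : (0:ℝ) < f₁ := by exact_mod_cast lt_of_lt_of_le hapos haf1
  have hf2pos : (0:ℝ) < f₂ := by exact_mod_cast lt_of_lt_of_le hapos haf2
  have hapos' : (0:ℝ) < a := by exact_mod_cast hapos
  have haf2' : (a:ℝ) ≤ f₂ := by exact_mod_cast haf2
  have hT : (0:ℝ) < (f₁:ℝ) + f₂ - a := by linarith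
  have hs1 : Real.sqrt f₁ ^ 2 = f₁ := Real.sq_sqrt (le_of_lt hf1pos)
  have hs2 : Real.sqrt f₂ ^ 2 = f₂ := Real.sq_sqrt (le_of_lt hf2pos)
  have hs1pos : (0:ℝ) < Real.sqrt f₁ := Real.sqrt_pos.mpr hf1pos
  have hs2pos : (0:ℝ) < Real.sqrt f₂ := Real.sqrt_pos.mpr hf2pos
  have h1 : ∀ i, u i ^ 2 * v i ^ 2 = if i ∈ Su ∩ Sv then 1 / ((f₁:ℝ) * f₂) else 0 := by
    intro i
    rw [hubin i, hvbin i]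
    by_cases h : i ∈ Su <;> by_cases h' : i ∈ Sv <;>
      simp [h, h', Finset.mem_inter, div_pow, hs1, hs2, div_mul_div_comm, mul_comm]
  have h2 : ∀ i, u i * v i = if i ∈ Su ∩ Sv then 1 / (Real.sqrt f₁ * Real.sqrt f₂) else 0 := by
    intro i
    rw [hubin i, hvbin i]
    by_cases h : i ∈ Su <;> by_cases h' : i ∈ Sv <;>
      simp [h, h', Finset.mem_inter, div_mul_div_comm, mul_comm]
  have hsum1 : ∑ i, u i ^ 2 * v i ^ 2 = (a:ℝ) / ((f₁:ℝ) * f₂) := by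
    simp only [h1]
    rw [Finset.sum_ite_mem, Finset.univ_inter, Finset.sum_const, ← ha]
    simp [div_eq_mul_inv]
  have hsum2 : ∑ i, u i * v i = (a:ℝ) / (Real.sqrt f₁ * Real.sqrt f₂) := by
    simp only [h2]
    rw [Finset.sum_ite_mem, Finset.univ_inter, Finset.sum_const, ← ha]
    simp [div_eq_mul_inv]
  rw [hsum1, hsum2, hR, div_pow, mul_pow, hs1, hs2]
  field_simp
end
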